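/- arXiv:2601.11773 — 6 statements merged into one kernel-verified Lean document; each statement's English description precedes it below -/
import Mathlib

section
/- Let p₁, p₂, p₃ be distinct primes, each congruent to 7 modulo 8, with (−p₁/p₂) = (−p₂/p₃) = (−p₃/p₁) = −1. Let (a, b) be the fundamental solution of the Pell equation x² − 2p₁p₂p₃·y² = 1. Then there exist integers b₁, b₂ with b = b₁·b₂, a + 1 = b₁², and a − 1 = 2p₁p₂p₃·b₂²; consequently b₁² − 2p₁p₂p₃·b₂² = 2 and 2·(a + b·√(2p₁p₂p₃)) = (b₁ + b₂·√(2p₁p₂p₃))². -/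
/-- `(a, b)` is the fundamental solution of the Pell equation `x² − D·y² = 1`:
the solution in positive integers with minimal `a`. -/
def IsFundamentalPellSolution (D a b : ℤ) : Prop :=
  0 < a ∧ 0 < b ∧ a ^ 2 - D * b ^ 2 = 1 ∧
    ∀ a' b' : ℤ, 0 < a' → 0 < b' → a' ^ 2 - D * b' ^ 2 = 1 → a ≤ a'

/-!
Write `P = p₁p₂p₃`. As `a` is odd and `b` even, `(a - 1)/2` and `(a + 1)/2` are coprime with
product `2P(b/2)²`, so `(a - 1)/2 = d₁s²` and `(a + 1)/2 = d₂t²` with `d₁d₂ = 2P` and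
`d₂t² - d₁s² = 1`. Modulo a prime dividing `d₁` this makes `d₂` a square, modulo a prime dividing
`d₂` it makes `-d₁` a square. Since `(2/pᵢ) = 1`, `(-1/pᵢ) = -1` and, by reciprocity,
`(p₁/p₂) = (p₂/p₃) = (p₃/p₁) = 1 = -(p₂/p₁) = -(p₃/p₂) = -(p₁/p₃)`, a prime `pᵢ` dividing `d₂`
forces the next one around the cycle `p₁ → p₃ → p₂ → p₁` to divide `d₂` as well, and all three
cannot, as `-d₁ ∈ {-1, -2}` is not a square modulo `p₁`. Hence `d₂ ∣ 2`; `d₂ = 1` would make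
`(t, s)` a smaller solution, so `d₂ = 2`, `b₁ = 2t` and `b₂ = s`.
-/

theorem Nat.exists_eq_mul_sq_of_coprime_of_mul_eq {x y n c : ℕ} (hxy : x.Coprime y)
    (h : x * y = n * c ^ 2) (hn : 0 < n) :
    ∃ d₁ d₂ s t : ℕ, d₁ * d₂ = n ∧ x = d₁ * s ^ 2 ∧ y = d₂ * t ^ 2 ∧ c = s * t := by
  have hd : n.gcd x * n.gcd y = n :=
    (Nat.gcd_mul_gcd_eq_iff_dvd_mul_of_coprime hxy).2 ⟨c ^ 2, h⟩
  obtain ⟨x', hx⟩ := n.gcd_dvd_right x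
  obtain ⟨y', hy⟩ := n.gcd_dvd_right y
  have hx'y' : x' * y' = c ^ 2 := by
    refine Nat.eq_of_mul_eq_mul_left hn ?_
    calc n * (x' * y') = (n.gcd x * x') * (n.gcd y * y') := by rw [mul_mul_mul_comm, hd]
      _ = n * c ^ 2 := by rw [← hx, ← hy, h]
  have hcop : x'.Coprime y' :=
    (hxy.coprime_dvd_left ⟨_, hx.trans (mul_comm _ _)⟩).coprime_dvd_right
      ⟨_, hy.trans (mul_comm _ _)⟩
  obtain ⟨s, rfl⟩ := exists_eq_pow_of_mul_eq_pow (Nat.isUnit_iff.2 hcop) hx'y'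
  obtain ⟨t, rfl⟩ := exists_eq_pow_of_mul_eq_pow (Nat.isUnit_iff.2 hcop.symm)
    ((mul_comm _ _).trans hx'y')
  exact ⟨_, _, s, t, hd, hx, hy,
    Nat.pow_left_injective two_ne_zero (show c ^ 2 = (s * t) ^ 2 by rw [← hx'y']; ring)⟩

theorem Nat.exists_mul_succ_eq_of_sq_eq_two_mul_mul_sq_add_one {m a b : ℕ} (hm : Odd m)
    (h : a ^ 2 = 2 * m * b ^ 2 + 1) :
    ∃ K c : ℕ, a = 2 * K + 1 ∧ b = 2 * c ∧ K * (K + 1) = 2 * m * c ^ 2 := by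
  obtain ⟨K, rfl⟩ : Odd a := by
    refine (Nat.odd_pow_iff two_ne_zero).1 ?_
    rw [h]
    exact ((even_two_mul m).mul_right _).add_one
  obtain ⟨j, hj⟩ := Nat.even_mul_succ_self K
  have hmb : m * b ^ 2 = 4 * j := by nlinarith
  obtain ⟨c, rfl⟩ : Even b := by
    by_contra hb
    have : Odd (m * b ^ 2) := hm.mul ((Nat.not_even_iff_odd.1 hb).pow)
    rw [hmb] at this
    exact Nat.not_even_iff_odd.2 this ⟨2 * j, by ring⟩
  exact ⟨K, c, rfl, (two_mul c).symm, by nlinarith⟩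

theorem Nat.exists_factorization_of_sq_eq_two_mul_mul_sq_add_one {m a b : ℕ} (hm : Odd m)
    (h : a ^ 2 = 2 * m * b ^ 2 + 1) :
    ∃ d₁ d₂ s t : ℕ, d₁ * d₂ = 2 * m ∧ d₂ * t ^ 2 = d₁ * s ^ 2 + 1 ∧
      a = 2 * d₁ * s ^ 2 + 1 ∧ b = 2 * s * t := by
  obtain ⟨K, c, rfl, rfl, hK⟩ := Nat.exists_mul_succ_eq_of_sq_eq_two_mul_mul_sq_add_one hm h
  obtain ⟨d₁, d₂, s, t, hd, hs, ht, rfl⟩ :=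
    Nat.exists_eq_mul_sq_of_coprime_of_mul_eq
      (Nat.coprime_self_add_right.2 (Nat.coprime_one_right K)) hK (by have := hm.pos; omega)
  exact ⟨d₁, d₂, s, t, hd, by omega, by rw [hs]; ring, by ring⟩

theorem Nat.dvd_of_mul_eq_mul_of_dvd {x y m n : ℕ} (h : x * y = m * n) (hn : n ∣ y)
    (hn₀ : n ≠ 0) : x ∣ m := by
  obtain ⟨w, rfl⟩ := hn
  exact ⟨w, Nat.eq_of_mul_eq_mul_right (Nat.pos_of_ne_zero hn₀) (by rw [← h]; ring)⟩

theorem IsFundamentalPellSolution.add_one_ne_two_mul_sq {D a b s t : ℤ}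
    (hab : IsFundamentalPellSolution D a b) (hD : 0 < D) (hs : 0 < s) (ht : 0 < t)
    (h : t ^ 2 - D * s ^ 2 = 1) : a + 1 ≠ 2 * t ^ 2 := by
  intro hat
  have hle : a ≤ t := hab.2.2.2 t s ht hs h
  nlinarith [mul_pos hD (pow_pos hs 2)]

theorem two_mul_add_mul_sqrt_eq_sq {D a b b₁ b₂ : ℝ} (hD : 0 ≤ D) (h₁ : a + 1 = b₁ ^ 2)
    (h₂ : a - 1 = D * b₂ ^ 2) (hb : b = b₁ * b₂) :
    2 * (a + b * √D) = (b₁ + b₂ * √D) ^ 2 := by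
  rw [hb]
  linear_combination h₁ + h₂ - b₂ ^ 2 * Real.sq_sqrt hD

namespace legendreSym

variable {p : ℕ} [Fact p.Prime]

theorem eq_one_of_mul_sq_eq_one {d : ℤ} {x : ZMod p} (h : (d : ZMod p) * x ^ 2 = 1) :
    legendreSym p d = 1 :=
  eq_one_of_sq_sub_mul_sq_eq_zero' (x := 1) (y := x) (left_ne_zero_of_mul_eq_one h) one_ne_zero
    (by rw [one_pow, h, sub_self])

theorem eq_one_of_mul_sq_eq_mul_sq_add_one {d₁ d₂ s t : ℕ} (h : d₂ * t ^ 2 = d₁ * s ^ 2 + 1)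
    (hp : p ∣ d₁) : legendreSym p d₂ = 1 := by
  refine eq_one_of_mul_sq_eq_one (x := (t : ZMod p)) ?_
  have := congrArg (Nat.cast : ℕ → ZMod p) h
  push_cast [(ZMod.natCast_eq_zero_iff _ _).2 hp] at this
  simpa using this

theorem neg_eq_one_of_mul_sq_eq_mul_sq_add_one {d₁ d₂ s t : ℕ}
    (h : d₂ * t ^ 2 = d₁ * s ^ 2 + 1) (hp : p ∣ d₂) : legendreSym p (-d₁) = 1 := by
  refine eq_one_of_mul_sq_eq_one (x := (s : ZMod p)) ?_
  have := congrArg (Nat.cast : ℕ → ZMod p) h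
  push_cast [(ZMod.natCast_eq_zero_iff _ _).2 hp] at this
  push_cast
  linear_combination this

theorem at_neg_one_of_mod_four_eq_three (hp : p % 4 = 3) : legendreSym p (-1) = -1 := by
  rw [at_neg_one (by omega)]
  exact ZMod.χ₄_nat_three_mod_four hp

theorem at_two_of_mod_eight_eq_seven (hp : p % 8 = 7) : legendreSym p 2 = 1 := by
  rw [at_two (by omega), ZMod.χ₈_nat_mod_eight, hp]
  decide

theorem at_neg_two_of_mod_eight_eq_seven (hp : p % 8 = 7) : legendreSym p (-2) = -1 := by
  rw [show (-2 : ℤ) = -1 * 2 by norm_num, legendreSym.mul,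
    at_neg_one_of_mod_four_eq_three (by omega), at_two_of_mod_eight_eq_seven hp]
  norm_num

theorem eq_one_of_neg_eq_neg_one {q : ℕ} (hp : p % 4 = 3) (h : legendreSym p (-q) = -1) :
    legendreSym p q = 1 := by
  rw [neg_eq_neg_one_mul, legendreSym.mul, at_neg_one_of_mod_four_eq_three hp] at h
  linarith

theorem eq_neg_one_of_neg_eq_neg_one {q : ℕ} [Fact q.Prime] (hp : p % 4 = 3) (hq : q % 4 = 3)
    (h : legendreSym p (-q) = -1) : legendreSym q p = -1 := by
  rw [quadratic_reciprocity_three_mod_four hp hq, eq_one_of_neg_eq_neg_one hp h]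

theorem neg_eq_neg_one_of_dvd_two (hp : p % 8 = 7) {d : ℕ} (hd : d ∣ 2) :
    legendreSym p (-d) = -1 := by
  rcases (Nat.dvd_prime Nat.prime_two).1 hd with rfl | rfl
  · exact_mod_cast at_neg_one_of_mod_four_eq_three (by omega)
  · exact_mod_cast at_neg_two_of_mod_eight_eq_seven hp

theorem eq_one_of_dvd_two_mul (hp : p % 8 = 7) {r w : ℕ} (hr : r.Prime)
    (hrp : legendreSym p r = 1) (hw : w ∣ 2 * r) : legendreSym p w = 1 := by
  obtain ⟨y, z, hy, hz, rfl⟩ := Nat.dvd_mul.1 hw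
  rw [Nat.cast_mul, legendreSym.mul]
  rcases (Nat.dvd_prime Nat.prime_two).1 hy with rfl | rfl <;>
    rcases (Nat.dvd_prime hr).1 hz with rfl | rfl <;>
    simp [at_two_of_mod_eight_eq_seven hp, hrp]

end legendreSym

theorem dvd_of_dvd_of_mul_sq_eq_mul_sq_add_one {p q r d₁ d₂ s t : ℕ} [Fact p.Prime]
    (hr : r.Prime) (hp : p % 8 = 7) (hqp : legendreSym p q = -1) (hrp : legendreSym p r = 1)
    (hd : d₁ * d₂ = 2 * q * r * p) (h : d₂ * t ^ 2 = d₁ * s ^ 2 + 1) (hq : q ∣ d₂) :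
    p ∣ d₂ := by
  by_contra hpd₂
  have hpd₁ : p ∣ d₁ :=
    ((Nat.Prime.dvd_mul Fact.out).1 (hd ▸ dvd_mul_left p _)).resolve_right hpd₂
  have hq₀ : q ≠ 0 := by
    rintro rfl
    simp at hqp
  obtain ⟨w, rfl⟩ := hq
  obtain ⟨v, rfl⟩ := hpd₁
  have hqp₀ : 0 < q * p := Nat.pos_of_ne_zero (mul_ne_zero hq₀ (Fact.out : p.Prime).ne_zero)
  have hw : w ∣ 2 * r := ⟨v, Nat.eq_of_mul_eq_mul_left hqp₀ (by linear_combination -hd)⟩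
  have hqw := legendreSym.eq_one_of_mul_sq_eq_mul_sq_add_one h (dvd_mul_right p v)
  rw [Nat.cast_mul, legendreSym.mul, hqp, legendreSym.eq_one_of_dvd_two_mul hp hr hrp hw] at hqw
  norm_num at hqw

theorem dvd_two_of_mul_sq_eq_mul_sq_add_one (p₁ p₂ p₃ : ℕ)
    [Fact p₁.Prime] [Fact p₂.Prime] [Fact p₃.Prime]
    (hd₁₂ : p₁ ≠ p₂) (hd₁₃ : p₁ ≠ p₃) (hd₂₃ : p₂ ≠ p₃)
    (hc₁ : p₁ % 8 = 7) (hc₂ : p₂ % 8 = 7) (hc₃ : p₃ % 8 = 7)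
    (h₁ : legendreSym p₂ (-(p₁ : ℤ)) = -1)
    (h₂ : legendreSym p₃ (-(p₂ : ℤ)) = -1)
    (h₃ : legendreSym p₁ (-(p₃ : ℤ)) = -1)
    {d₁ d₂ s t : ℕ} (hd : d₁ * d₂ = 2 * p₁ * p₂ * p₃) (h : d₂ * t ^ 2 = d₁ * s ^ 2 + 1) :
    d₂ ∣ 2 := by
  have h₁₂ := legendreSym.eq_one_of_neg_eq_neg_one (by omega) h₁
  have h₂₃ := legendreSym.eq_one_of_neg_eq_neg_one (by omega) h₂
  have h₃₁ := legendreSym.eq_one_of_neg_eq_neg_one (by omega) h₃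
  have h₂₁ := legendreSym.eq_neg_one_of_neg_eq_neg_one (by omega) (by omega) h₁
  have h₃₂ := legendreSym.eq_neg_one_of_neg_eq_neg_one (by omega) (by omega) h₂
  have h₁₃ := legendreSym.eq_neg_one_of_neg_eq_neg_one (by omega) (by omega) h₃
  have dvd₁₃ : p₁ ∣ d₂ → p₃ ∣ d₂ :=
    dvd_of_dvd_of_mul_sq_eq_mul_sq_add_one Fact.out hc₃ h₁₃ h₂₃ (hd.trans (by ring)) h
  have dvd₃₂ : p₃ ∣ d₂ → p₂ ∣ d₂ :=
    dvd_of_dvd_of_mul_sq_eq_mul_sq_add_one Fact.out hc₂ h₃₂ h₁₂ (hd.trans (by ring)) h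
  have dvd₂₁ : p₂ ∣ d₂ → p₁ ∣ d₂ :=
    dvd_of_dvd_of_mul_sq_eq_mul_sq_add_one Fact.out hc₁ h₂₁ h₃₁ (hd.trans (by ring)) h
  have hcop₁₂ := (Nat.coprime_primes Fact.out Fact.out).2 hd₁₂
  have hcop₁₃ := (Nat.coprime_primes Fact.out Fact.out).2 hd₁₃
  have hcop₂₃ := (Nat.coprime_primes Fact.out Fact.out).2 hd₂₃
  have hP₀ : p₁ * p₂ * p₃ ≠ 0 := by
    simp [(Fact.out : p₁.Prime).ne_zero, (Fact.out : p₂.Prime).ne_zero,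
      (Fact.out : p₃.Prime).ne_zero]
  have hp₁ : ¬ p₁ ∣ d₂ := by
    intro hp₁
    have hP : p₁ * p₂ * p₃ ∣ d₂ :=
      ((hcop₁₃.mul_left hcop₂₃).mul_dvd_of_dvd_of_dvd
        (hcop₁₂.mul_dvd_of_dvd_of_dvd hp₁ (dvd₃₂ (dvd₁₃ hp₁))) (dvd₁₃ hp₁))
    have hd₁ : d₁ ∣ 2 := Nat.dvd_of_mul_eq_mul_of_dvd (by rw [hd]; ring) hP hP₀
    have := legendreSym.neg_eq_one_of_mul_sq_eq_mul_sq_add_one h hp₁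
    rw [legendreSym.neg_eq_neg_one_of_dvd_two hc₁ hd₁] at this
    norm_num at this
  have hcop : (p₁ * p₂ * p₃).Coprime d₂ := by
    refine Nat.Coprime.mul_left (Nat.Coprime.mul_left ?_ ?_) ?_ <;>
      refine (Nat.Prime.coprime_iff_not_dvd Fact.out).2 ?_
    exacts [hp₁, fun h₂ ↦ hp₁ (dvd₂₁ h₂), fun h₃ ↦ hp₁ (dvd₂₁ (dvd₃₂ h₃))]
  exact Nat.dvd_of_mul_eq_mul_of_dvd (by rw [mul_comm, hd]; ring)
    (hcop.dvd_of_dvd_mul_right ⟨2, by rw [hd]; ring⟩) hP₀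

/-- decomposition of the fundamental solution of
`x² − 2p₁p₂p₃·y² = 1` for primes `p₁, p₂, p₃ ≡ 7 (mod 8)` with
`(−p₁/p₂) = (−p₂/p₃) = (−p₃/p₁) = −1`. -/
theorem stmt_3 (p₁ p₂ p₃ : ℕ)
    [hp₁ : Fact p₁.Prime] [hp₂ : Fact p₂.Prime] [hp₃ : Fact p₃.Prime]
    (hd₁₂ : p₁ ≠ p₂) (hd₁₃ : p₁ ≠ p₃) (hd₂₃ : p₂ ≠ p₃)
    (hc₁ : p₁ % 8 = 7) (hc₂ : p₂ % 8 = 7) (hc₃ : p₃ % 8 = 7)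
    (h₁ : legendreSym p₂ (-(p₁ : ℤ)) = -1)
    (h₂ : legendreSym p₃ (-(p₂ : ℤ)) = -1)
    (h₃ : legendreSym p₁ (-(p₃ : ℤ)) = -1)
    (a b : ℤ)
    (hab : IsFundamentalPellSolution (2 * p₁ * p₂ * p₃) a b) :
    ∃ b₁ b₂ : ℤ, b = b₁ * b₂ ∧ a + 1 = b₁ ^ 2 ∧
      a - 1 = 2 * p₁ * p₂ * p₃ * b₂ ^ 2 ∧
      b₁ ^ 2 - 2 * p₁ * p₂ * p₃ * b₂ ^ 2 = 2 ∧
      2 * ((a : ℝ) + (b : ℝ) * Real.sqrt (2 * p₁ * p₂ * p₃)) =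
        ((b₁ : ℝ) + (b₂ : ℝ) * Real.sqrt (2 * p₁ * p₂ * p₃)) ^ 2 := by
  lift a to ℕ using hab.1.le
  lift b to ℕ using hab.2.1.le
  have hodd : Odd (p₁ * p₂ * p₃) :=
    (Nat.odd_iff.2 (by omega)).mul (Nat.odd_iff.2 (by omega)) |>.mul (Nat.odd_iff.2 (by omega))
  obtain ⟨d₁, d₂, s, t, hd, heq, rfl, rfl⟩ :=
    Nat.exists_factorization_of_sq_eq_two_mul_mul_sq_add_one (a := a) (b := b) hodd
      (by zify; linear_combination hab.2.2.1)
  have heqZ : (d₂ * t ^ 2 : ℤ) = d₁ * s ^ 2 + 1 := by exact_mod_cast heq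
  rcases (Nat.dvd_prime Nat.prime_two).1
      (dvd_two_of_mul_sq_eq_mul_sq_add_one p₁ p₂ p₃ hd₁₂ hd₁₃ hd₂₃ hc₁ hc₂ hc₃ h₁ h₂ h₃
        (hd.trans (by ring)) heq)
    with rfl | rfl
  · obtain rfl : d₁ = 2 * (p₁ * p₂ * p₃) := by omega
    obtain ⟨hs, ht⟩ : 0 < s ∧ 0 < t := by
      constructor <;> refine Nat.pos_of_ne_zero ?_ <;> rintro rfl <;> simpa using hab.2.1
    have hD : (0 : ℤ) < p₁ * p₂ * p₃ := by exact_mod_cast hodd.pos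
    push_cast at heqZ hab
    refine absurd ?_ (hab.add_one_ne_two_mul_sq (s := s) (t := t) (by linarith)
      (by exact_mod_cast hs) (by exact_mod_cast ht) (by linear_combination heqZ))
    linear_combination -2 * heqZ
  · obtain rfl : d₁ = p₁ * p₂ * p₃ := by omega
    push_cast at heqZ ⊢
    have hplus : 2 * (p₁ * p₂ * p₃ : ℤ) * s ^ 2 + 1 + 1 = (2 * t) ^ 2 := by
      linear_combination -2 * heqZ
    refine ⟨2 * t, s, by ring, hplus, by ring, by linear_combination -hplus, ?_⟩
    exact two_mul_add_mul_sqrt_eq_sq (by positivity) (by exact_mod_cast hplus) (by push_cast; ring)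
      (by push_cast; ring)
end

section
/- Let p₁, p₂, p₃ be distinct primes, each congruent to 7 modulo 8, with (−p₁/p₂) = (−p₂/p₃) = (−p₃/p₁) = −1, and let {i, j, k} = {1, 2, 3}. Then there are no integers a, b₁, b₂ with a + 1 = 2pᵢ·b₁² and a − 1 = pⱼpₖ·b₂², and there are no integers a, b₁, b₂ with a − 1 = 2pᵢ·b₁² and a + 1 = pⱼpₖ·b₂². -/
open ZMod

private lemma leg_congr {p : ℕ} [Fact p.Prime] {a b : ℤ} (h : (a : ZMod p) = (b : ZMod p)) :
    legendreSym p a = legendreSym p b := by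
  unfold legendreSym; rw [h]

private lemma ne_two_of_mod8 {p : ℕ} (h : p % 8 = 7) : p ≠ 2 := by omega

private lemma leg_neg_one {p : ℕ} [Fact p.Prime] (h : p % 8 = 7) :
    legendreSym p (-1) = -1 := by
  rw [legendreSym.at_neg_one (ne_two_of_mod8 h), χ₄_nat_three_mod_four (by omega)]

private lemma leg_two {p : ℕ} [Fact p.Prime] (h : p % 8 = 7) :
    legendreSym p 2 = 1 := by
  rw [legendreSym.at_two (ne_two_of_mod8 h), χ₈_nat_mod_eight, h]; decide

private lemma two_ne_zero_zmod {p : ℕ} [Fact p.Prime] (h : p % 8 = 7) : (2 : ZMod p) ≠ 0 := by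
  have : ((2 : ℕ) : ZMod p) ≠ 0 := by
    rw [Ne, ZMod.natCast_eq_zero_iff]
    intro hd
    have := Nat.le_of_dvd (by norm_num) hd
    omega
  simpa using this

/-- If `r * b² ≡ 1 mod s` then `(r/s) = 1`. -/
private lemma leg_eq_one_of {s : ℕ} [Fact s.Prime] {r : ℕ} {b : ℤ}
    (h : (r : ZMod s) * (b : ZMod s) ^ 2 = 1) : legendreSym s r = 1 := by
  have hb : (b : ZMod s) ≠ 0 := by
    intro h0; rw [h0] at h; simp at h
  have h1 : legendreSym s ((r : ℤ) * b ^ 2) = legendreSym s 1 := by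
    apply leg_congr; push_cast; simpa using h
  rw [legendreSym.at_one, legendreSym.mul, legendreSym.sq_one' (p := s) hb, mul_one] at h1
  exact h1

/-- If `r * b² ≡ -1 mod s`, `s % 8 = 7`, then `(r/s) = -1`. -/
private lemma leg_eq_neg_one_of {s : ℕ} [Fact s.Prime] (hs : s % 8 = 7) {r : ℕ} {b : ℤ}
    (h : (r : ZMod s) * (b : ZMod s) ^ 2 = -1) : legendreSym s r = -1 := by
  have hb : (b : ZMod s) ≠ 0 := by
    intro h0; rw [h0] at h
    simp only [ne_eq, OfNat.ofNat_ne_zero, not_false_eq_true, zero_pow, mul_zero] at h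
    exact one_ne_zero (neg_eq_zero.mp h.symm)
  have h1 : legendreSym s ((r : ℤ) * b ^ 2) = legendreSym s (-1) := by
    apply leg_congr; push_cast; simpa using h
  rw [leg_neg_one hs, legendreSym.mul, legendreSym.sq_one' (p := s) hb, mul_one] at h1
  exact h1

private lemma case1 (r s t : ℕ) [Fact r.Prime] [Fact s.Prime] [Fact t.Prime]
    (h7r : r % 8 = 7) (h7s : s % 8 = 7) (h7t : t % 8 = 7) :
    ¬ ∃ a b₁ b₂ : ℤ, a + 1 = 2 * r * b₁ ^ 2 ∧ a - 1 = s * t * b₂ ^ 2 := by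
  rintro ⟨a, b₁, b₂, e₁, e₂⟩
  have key : (2 : ℤ) * r * b₁ ^ 2 - s * t * b₂ ^ 2 = 2 := by linarith
  -- (r/s) = 1
  have hs1 : legendreSym s r = 1 := by
    apply leg_eq_one_of (b := b₁)
    have hcast := congrArg (fun z : ℤ => (z : ZMod s)) key
    push_cast at hcast
    have hs0 : ((s : ℕ) : ZMod s) = 0 := ZMod.natCast_self s
    apply mul_left_cancel₀ (two_ne_zero_zmod h7s)
    rw [mul_one]
    linear_combination hcast + ((t : ZMod s) * (b₂ : ZMod s) ^ 2) * hs0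
  -- (r/t) = 1
  have ht1 : legendreSym t r = 1 := by
    apply leg_eq_one_of (b := b₁)
    have hcast := congrArg (fun z : ℤ => (z : ZMod t)) key
    push_cast at hcast
    have ht0 : ((t : ℕ) : ZMod t) = 0 := ZMod.natCast_self t
    apply mul_left_cancel₀ (two_ne_zero_zmod h7t)
    rw [mul_one]
    linear_combination hcast + ((s : ZMod t) * (b₂ : ZMod t) ^ 2) * ht0
  -- mod r : s*t*b₂² ≡ -2
  have hcast := congrArg (fun z : ℤ => (z : ZMod r)) key
  push_cast at hcast
  have hr0 : ((r : ℕ) : ZMod r) = 0 := ZMod.natCast_self r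
  have hmod : ((s : ZMod r) * t) * (b₂ : ZMod r) ^ 2 = -2 := by
    linear_combination -hcast + (2 * (b₁ : ZMod r) ^ 2) * hr0
  have hb₂ : (b₂ : ZMod r) ≠ 0 := by
    intro h0
    rw [h0] at hmod
    simp only [ne_eq, OfNat.ofNat_ne_zero, not_false_eq_true, zero_pow, mul_zero] at hmod
    exact two_ne_zero_zmod h7r (neg_eq_zero.mp hmod.symm)
  have hleg : legendreSym r ((s : ℤ) * t * b₂ ^ 2) = legendreSym r (-2) := by
    apply leg_congr; push_cast; simpa using hmod
  have hneg2 : legendreSym r (-2) = -1 := by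
    have : (-2 : ℤ) = -1 * 2 := by norm_num
    rw [this, legendreSym.mul, leg_neg_one h7r, leg_two h7r]; norm_num
  rw [hneg2, legendreSym.mul, legendreSym.mul, legendreSym.sq_one' (p := r) hb₂, mul_one] at hleg
  norm_num at hneg2 ⊢
  -- reciprocity
  have hrs : legendreSym r s = -legendreSym s r :=
    legendreSym.quadratic_reciprocity_three_mod_four (by omega) (by omega)
  have hrt : legendreSym r t = -legendreSym t r :=
    legendreSym.quadratic_reciprocity_three_mod_four (by omega) (by omega)
  rw [hrs, hrt, hs1, ht1] at hleg
  norm_num at hleg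

private lemma case2 (r s t : ℕ) [Fact r.Prime] [Fact s.Prime] [Fact t.Prime]
    (h7s : s % 8 = 7) (h7t : t % 8 = 7)
    (hP : legendreSym s r = 1 ∨ legendreSym t r = 1) :
    ¬ ∃ a b₁ b₂ : ℤ, a - 1 = 2 * r * b₁ ^ 2 ∧ a + 1 = s * t * b₂ ^ 2 := by
  rintro ⟨a, b₁, b₂, e₁, e₂⟩
  have key : (s : ℤ) * t * b₂ ^ 2 - 2 * r * b₁ ^ 2 = 2 := by linarith
  have hs1 : legendreSym s r = -1 := by
    apply leg_eq_neg_one_of h7s (b := b₁)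
    have hcast := congrArg (fun z : ℤ => (z : ZMod s)) key
    push_cast at hcast
    have hs0 : ((s : ℕ) : ZMod s) = 0 := ZMod.natCast_self s
    apply mul_left_cancel₀ (two_ne_zero_zmod h7s)
    rw [mul_neg_one]
    linear_combination -hcast + ((t : ZMod s) * (b₂ : ZMod s) ^ 2) * hs0
  have ht1 : legendreSym t r = -1 := by
    apply leg_eq_neg_one_of h7t (b := b₁)
    have hcast := congrArg (fun z : ℤ => (z : ZMod t)) key
    push_cast at hcast
    have ht0 : ((t : ℕ) : ZMod t) = 0 := ZMod.natCast_self t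
    apply mul_left_cancel₀ (two_ne_zero_zmod h7t)
    rw [mul_neg_one]
    linear_combination -hcast + ((s : ZMod t) * (b₂ : ZMod t) ^ 2) * ht0
  rcases hP with h | h <;> omega

private lemma both_cases (r s t : ℕ) [Fact r.Prime] [Fact s.Prime] [Fact t.Prime]
    (h7r : r % 8 = 7) (h7s : s % 8 = 7) (h7t : t % 8 = 7)
    (hP : legendreSym s r = 1 ∨ legendreSym t r = 1) :
    (¬ ∃ a b₁ b₂ : ℤ, a + 1 = 2 * r * b₁ ^ 2 ∧ a - 1 = s * t * b₂ ^ 2) ∧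
    (¬ ∃ a b₁ b₂ : ℤ, a - 1 = 2 * r * b₁ ^ 2 ∧ a + 1 = s * t * b₂ ^ 2) :=
  ⟨case1 r s t h7r h7s h7t, case2 r s t h7s h7t hP⟩

/-- for distinct primes `p₁, p₂, p₃ ≡ 7 (mod 8)` with
`(−p₁/p₂) = (−p₂/p₃) = (−p₃/p₁) = −1` and `{qᵢ, qⱼ, qₖ} = {p₁, p₂, p₃}`,
there are no integers `a, b₁, b₂` with `a ± 1 = 2qᵢ·b₁²` and `a ∓ 1 = qⱼqₖ·b₂²`. -/
theorem stmt_4 (p₁ p₂ p₃ : ℕ)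
    [hp₁ : Fact p₁.Prime] [hp₂ : Fact p₂.Prime] [hp₃ : Fact p₃.Prime]
    (hd₁₂ : p₁ ≠ p₂) (hd₁₃ : p₁ ≠ p₃) (hd₂₃ : p₂ ≠ p₃)
    (hc₁ : p₁ % 8 = 7) (hc₂ : p₂ % 8 = 7) (hc₃ : p₃ % 8 = 7)
    (h₁ : legendreSym p₂ (-(p₁ : ℤ)) = -1)
    (h₂ : legendreSym p₃ (-(p₂ : ℤ)) = -1)
    (h₃ : legendreSym p₁ (-(p₃ : ℤ)) = -1)
    (qi qj qk : ℕ) (hq : ({qi, qj, qk} : Set ℕ) = {p₁, p₂, p₃}) :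
    (¬ ∃ a b₁ b₂ : ℤ, a + 1 = 2 * qi * b₁ ^ 2 ∧ a - 1 = qj * qk * b₂ ^ 2) ∧
    (¬ ∃ a b₁ b₂ : ℤ, a - 1 = 2 * qi * b₁ ^ 2 ∧ a + 1 = qj * qk * b₂ ^ 2) := by
  -- turn the hypotheses into plain Legendre symbol statements
  have g₁ : legendreSym p₂ (p₁ : ℤ) = 1 := by
    have : (-(p₁ : ℤ)) = -1 * p₁ := by ring
    rw [this, legendreSym.mul, leg_neg_one hc₂] at h₁
    omega
  have g₂ : legendreSym p₃ (p₂ : ℤ) = 1 := by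
    have : (-(p₂ : ℤ)) = -1 * p₂ := by ring
    rw [this, legendreSym.mul, leg_neg_one hc₃] at h₂
    omega
  have g₃ : legendreSym p₁ (p₃ : ℤ) = 1 := by
    have : (-(p₃ : ℤ)) = -1 * p₃ := by ring
    rw [this, legendreSym.mul, leg_neg_one hc₁] at h₃
    omega
  -- extract the permutation
  have mi : qi = p₁ ∨ qi = p₂ ∨ qi = p₃ := by
    have : qi ∈ ({p₁, p₂, p₃} : Set ℕ) := hq ▸ (by simp)
    simpa using this
  have mj : qj = p₁ ∨ qj = p₂ ∨ qj = p₃ := by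
    have : qj ∈ ({p₁, p₂, p₃} : Set ℕ) := hq ▸ (by simp)
    simpa using this
  have mk : qk = p₁ ∨ qk = p₂ ∨ qk = p₃ := by
    have : qk ∈ ({p₁, p₂, p₃} : Set ℕ) := hq ▸ (by simp)
    simpa using this
  have m₁ : p₁ = qi ∨ p₁ = qj ∨ p₁ = qk := by
    have : p₁ ∈ ({qi, qj, qk} : Set ℕ) := hq ▸ (by simp)
    simpa [eq_comm] using this
  have m₂ : p₂ = qi ∨ p₂ = qj ∨ p₂ = qk := by
    have : p₂ ∈ ({qi, qj, qk} : Set ℕ) := hq ▸ (by simp)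
    simpa [eq_comm] using this
  have m₃ : p₃ = qi ∨ p₃ = qj ∨ p₃ = qk := by
    have : p₃ ∈ ({qi, qj, qk} : Set ℕ) := hq ▸ (by simp)
    simpa [eq_comm] using this
  rcases mi with rfl | rfl | rfl <;> rcases mj with rfl | rfl | rfl <;>
      rcases mk with rfl | rfl | rfl <;>
    first
    | exact both_cases _ _ _ hc₁ hc₂ hc₃ (Or.inl g₁)
    | exact both_cases _ _ _ hc₁ hc₃ hc₂ (Or.inr g₁)
    | exact both_cases _ _ _ hc₂ hc₁ hc₃ (Or.inr g₂)
    | exact both_cases _ _ _ hc₂ hc₃ hc₁ (Or.inl g₂)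
    | exact both_cases _ _ _ hc₃ hc₁ hc₂ (Or.inl g₃)
    | exact both_cases _ _ _ hc₃ hc₂ hc₁ (Or.inr g₃)
    | (exfalso; rcases m₁ with e₁ | e₁ | e₁ <;> rcases m₂ with e₂ | e₂ | e₂ <;>
        rcases m₃ with e₃ | e₃ | e₃ <;> omega)
end

section
/- Let p₂, p₃, p₄ be distinct primes with p₂ ≡ 7 (mod 8), p₃ ≡ p₄ ≡ 3 (mod 8), and (p₃/p₂) = (p₂/p₄) = (p₃/p₄) = −1. Then there are no integers a, b₁, b₂ with a + 1 = b₁² and a − 1 = 2p₂p₃p₄·b₂², and there are no integers a, b₁, b₂ with a − 1 = b₁² and a + 1 = 2p₂p₃p₄·b₂². -/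
/-- for distinct primes `p₂ ≡ 7 (mod 8)`, `p₃ ≡ p₄ ≡ 3 (mod 8)` with
`(p₃/p₂) = (p₂/p₄) = (p₃/p₄) = −1`, there are no integers `a, b₁, b₂` with
`a ± 1 = b₁²` and `a ∓ 1 = 2p₂p₃p₄·b₂²`. -/
theorem stmt_5 (p₂ p₃ p₄ : ℕ)
    [hp₂ : Fact p₂.Prime] [hp₃ : Fact p₃.Prime] [hp₄ : Fact p₄.Prime]
    (hd₂₃ : p₂ ≠ p₃) (hd₂₄ : p₂ ≠ p₄) (hd₃₄ : p₃ ≠ p₄)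
    (hc₂ : p₂ % 8 = 7) (hc₃ : p₃ % 8 = 3) (hc₄ : p₄ % 8 = 3)
    (h₁ : legendreSym p₂ (p₃ : ℤ) = -1)
    (h₂ : legendreSym p₄ (p₂ : ℤ) = -1)
    (h₃ : legendreSym p₄ (p₃ : ℤ) = -1) :
    (¬ ∃ a b₁ b₂ : ℤ, a + 1 = b₁ ^ 2 ∧ a - 1 = 2 * p₂ * p₃ * p₄ * b₂ ^ 2) ∧
    (¬ ∃ a b₁ b₂ : ℤ, a - 1 = b₁ ^ 2 ∧ a + 1 = 2 * p₂ * p₃ * p₄ * b₂ ^ 2) := by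
  have hp₃2 : p₃ ≠ 2 := by intro h; rw [h] at hc₃; norm_num at hc₃
  have hp₂2 : p₂ ≠ 2 := by intro h; rw [h] at hc₂; norm_num at hc₂
  constructor
  · rintro ⟨a, b₁, b₂, e1, e2⟩
    have key : b₁ ^ 2 = 2 * p₂ * p₃ * p₄ * b₂ ^ 2 + 2 := by linarith
    have : ((b₁ : ZMod p₃)) ^ 2 = 2 := by
      have := congrArg (Int.cast : ℤ → ZMod p₃) key
      push_cast at this
      rw [ZMod.natCast_self p₃] at this
      simpa using this
    have hsq : IsSquare (2 : ZMod p₃) := ⟨(b₁ : ZMod p₃), by rw [← this]; ring⟩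
    rw [ZMod.exists_sq_eq_two_iff hp₃2, hc₃] at hsq
    norm_num at hsq
  · rintro ⟨a, b₁, b₂, e1, e2⟩
    have key : b₁ ^ 2 = 2 * p₂ * p₃ * p₄ * b₂ ^ 2 - 2 := by linarith
    have : ((b₁ : ZMod p₂)) ^ 2 = -2 := by
      have := congrArg (Int.cast : ℤ → ZMod p₂) key
      push_cast at this
      rw [ZMod.natCast_self p₂] at this
      simpa using this
    have hsq : IsSquare (-2 : ZMod p₂) := ⟨(b₁ : ZMod p₂), by rw [← this]; ring⟩
    rw [ZMod.exists_sq_eq_neg_two_iff hp₂2, hc₂] at hsq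
    norm_num at hsq
end

section
/- Let p₂, p₃, p₄ be distinct primes with p₂ ≡ 7 (mod 8), p₃ ≡ p₄ ≡ 3 (mod 8), and (p₃/p₂) = (p₂/p₄) = (p₃/p₄) = −1. Let (a, b) be the fundamental solution of the Pell equation x² − 2p₂p₃p₄·y² = 1. Then there exist integers b₁, b₂ with b = b₁·b₂, a + 1 = 2p₄·b₁², and a − 1 = p₂p₃·b₂²; consequently 2p₄·b₁² − p₂p₃·b₂² = 2 and 2·(a + b·√(2p₂p₃p₄)) = (b₁·√(2p₄) + b₂·√(p₂p₃))². -/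
private lemma leg_one (q : ℕ) [Fact q.Prime] (n y : ℤ) (h : (q : ℤ) ∣ n * y ^ 2 - 1) :
    legendreSym q n = 1 := by
  have h0 : (n : ZMod q) * (y : ZMod q) ^ 2 = 1 := by
    have h1 := (ZMod.intCast_zmod_eq_zero_iff_dvd (n * y ^ 2 - 1) q).mpr h
    push_cast at h1
    linear_combination h1
  have hy : (y : ZMod q) ≠ 0 := by
    intro hy; rw [hy] at h0; simp at h0
  have hn : (n : ZMod q) ≠ 0 := by
    intro hn; rw [hn] at h0; simp at h0
  rw [legendreSym.eq_one_iff q hn]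
  refine ⟨(y : ZMod q)⁻¹, ?_⟩
  field_simp
  linear_combination h0

private lemma dvd_aux1 {k e e' s t q : ℤ} (hk1 : k = e * s ^ 2) (hk2 : k + 1 = e' * t ^ 2)
    (hq : q ∣ e) : q ∣ e' * t ^ 2 - 1 := by
  obtain ⟨w, rfl⟩ := hq
  exact ⟨w * s ^ 2, by linear_combination hk1 - hk2⟩

private lemma dvd_aux2 {k e e' s t q : ℤ} (hk1 : k = e * s ^ 2) (hk2 : k + 1 = e' * t ^ 2)
    (hq : q ∣ e') : q ∣ -e * s ^ 2 - 1 := by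
  obtain ⟨w, rfl⟩ := hq
  exact ⟨-(w * t ^ 2), by linear_combination hk1 - hk2⟩

private lemma extract (u e e' c : ℤ) (hu : 0 < u) (he : 0 < e) (he' : 0 < e')
    (hdu : e ∣ u) (hdv : e' ∣ u + 1) (heq : u * (u + 1) = e * e' * c ^ 2) :
    ∃ s t : ℤ, 0 < s ∧ 0 < t ∧ u = e * s ^ 2 ∧ u + 1 = e' * t ^ 2 ∧ c ^ 2 = (s * t) ^ 2 := by
  obtain ⟨m, hm⟩ := hdu
  obtain ⟨n, hn⟩ := hdv
  have hu1 : 0 < u + 1 := by omega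
  have hm0 : 0 < m := by nlinarith only [hm ▸ hu, he]
  have hn0 : 0 < n := by nlinarith only [hn ▸ hu1, he']
  have hmn : m * n = c ^ 2 := by
    have h2 : e * e' * (m * n) = e * e' * c ^ 2 := by
      linear_combination heq - (u + 1) * hm - e * m * hn
    exact mul_left_cancel₀ (ne_of_gt (mul_pos he he')) h2
  have hcop : IsCoprime m n := by
    have h0 : IsCoprime u (u + 1) := ⟨-1, 1, by ring⟩
    exact (h0.of_isCoprime_of_dvd_left ⟨e, by rw [hm]; ring⟩).of_isCoprime_of_dvd_right
      ⟨e', by rw [hn]; ring⟩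
  obtain ⟨s0, hs0⟩ := Int.sq_of_isCoprime hcop hmn
  obtain ⟨t0, ht0⟩ := Int.sq_of_isCoprime hcop.symm (by rw [mul_comm]; exact hmn)
  have hms : m = s0 ^ 2 := by
    rcases hs0 with h | h
    · exact h
    · exfalso; nlinarith only [sq_nonneg s0, hm0, h]
  have hnt : n = t0 ^ 2 := by
    rcases ht0 with h | h
    · exact h
    · exfalso; nlinarith only [sq_nonneg t0, hn0, h]
  refine ⟨|s0|, |t0|, abs_pos.mpr ?_, abs_pos.mpr ?_, ?_, ?_, ?_⟩
  · rintro rfl; simp at hms; omega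
  · rintro rfl; simp at hnt; omega
  · rw [sq_abs, hm, hms]
  · rw [sq_abs, hn, hnt]
  · rw [mul_pow, sq_abs, sq_abs, ← hms, ← hnt, hmn]

set_option maxHeartbeats 3200000 in
/-- decomposition of the fundamental solution of
`x² − 2p₂p₃p₄·y² = 1` for distinct primes `p₂ ≡ 7 (mod 8)`, `p₃ ≡ p₄ ≡ 3 (mod 8)`
with `(p₃/p₂) = (p₂/p₄) = (p₃/p₄) = −1`. -/
theorem stmt_6 (p₂ p₃ p₄ : ℕ)
    [hp₂ : Fact p₂.Prime] [hp₃ : Fact p₃.Prime] [hp₄ : Fact p₄.Prime]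
    (hd₂₃ : p₂ ≠ p₃) (hd₂₄ : p₂ ≠ p₄) (hd₃₄ : p₃ ≠ p₄)
    (hc₂ : p₂ % 8 = 7) (hc₃ : p₃ % 8 = 3) (hc₄ : p₄ % 8 = 3)
    (h₁ : legendreSym p₂ (p₃ : ℤ) = -1)
    (h₂ : legendreSym p₄ (p₂ : ℤ) = -1)
    (h₃ : legendreSym p₄ (p₃ : ℤ) = -1)
    (a b : ℤ)
    (hab : IsFundamentalPellSolution (2 * p₂ * p₃ * p₄) a b) :
    ∃ b₁ b₂ : ℤ, b = b₁ * b₂ ∧ a + 1 = 2 * p₄ * b₁ ^ 2 ∧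
      a - 1 = p₂ * p₃ * b₂ ^ 2 ∧
      2 * p₄ * b₁ ^ 2 - p₂ * p₃ * b₂ ^ 2 = 2 ∧
      2 * ((a : ℝ) + (b : ℝ) * Real.sqrt (2 * p₂ * p₃ * p₄)) =
        ((b₁ : ℝ) * Real.sqrt (2 * p₄) + (b₂ : ℝ) * Real.sqrt (p₂ * p₃)) ^ 2 := by
  obtain ⟨ha0, hb0, heq, hmin⟩ := hab
  have P2 : (0:ℤ) < (p₂:ℤ) := by exact_mod_cast hp₂.out.pos
  have P3 : (0:ℤ) < (p₃:ℤ) := by exact_mod_cast hp₃.out.pos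
  have P4 : (0:ℤ) < (p₄:ℤ) := by exact_mod_cast hp₄.out.pos
  -- basic Legendre symbol values
  have L22 : legendreSym p₂ 2 = 1 := by
    rw [legendreSym.at_two (by omega), ZMod.χ₈_nat_eq_if_mod_eight, if_neg (by omega),
      if_pos (Or.inr hc₂)]
  have L3_2 : legendreSym p₃ 2 = -1 := by
    rw [legendreSym.at_two (by omega), ZMod.χ₈_nat_eq_if_mod_eight, if_neg (by omega),
      if_neg (by omega)]
  have L4_2 : legendreSym p₄ 2 = -1 := by
    rw [legendreSym.at_two (by omega), ZMod.χ₈_nat_eq_if_mod_eight, if_neg (by omega),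
      if_neg (by omega)]
  have L2n1 : legendreSym p₂ (-1) = -1 := by
    rw [legendreSym.at_neg_one (by omega)]
    exact ZMod.χ₄_nat_three_mod_four (by omega)
  have L4n1 : legendreSym p₄ (-1) = -1 := by
    rw [legendreSym.at_neg_one (by omega)]
    exact ZMod.χ₄_nat_three_mod_four (by omega)
  have L24 : legendreSym p₂ (p₄ : ℤ) = 1 := by
    rw [legendreSym.quadratic_reciprocity_three_mod_four (by omega) (by omega), h₂]; norm_num
  have L32 : legendreSym p₃ (p₂ : ℤ) = 1 := by
    rw [legendreSym.quadratic_reciprocity_three_mod_four (by omega) (by omega), h₁]; norm_num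
  have L34 : legendreSym p₃ (p₄ : ℤ) = 1 := by
    rw [legendreSym.quadratic_reciprocity_three_mod_four (by omega) (by omega), h₃]; norm_num
  -- coprimality of the primes
  have c23 : IsCoprime ((p₂:ℕ):ℤ) ((p₃:ℕ):ℤ) :=
    Nat.isCoprime_iff_coprime.mpr ((Nat.coprime_primes hp₂.out hp₃.out).mpr hd₂₃)
  have c24 : IsCoprime ((p₂:ℕ):ℤ) ((p₄:ℕ):ℤ) :=
    Nat.isCoprime_iff_coprime.mpr ((Nat.coprime_primes hp₂.out hp₄.out).mpr hd₂₄)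
  have c34 : IsCoprime ((p₃:ℕ):ℤ) ((p₄:ℕ):ℤ) :=
    Nat.isCoprime_iff_coprime.mpr ((Nat.coprime_primes hp₃.out hp₄.out).mpr hd₃₄)
  have c02 : IsCoprime (2:ℤ) ((p₂:ℕ):ℤ) := by
    have := Nat.isCoprime_iff_coprime.mpr
      ((Nat.coprime_primes Nat.prime_two hp₂.out).mpr (by omega))
    exact_mod_cast this
  have c03 : IsCoprime (2:ℤ) ((p₃:ℕ):ℤ) := by
    have := Nat.isCoprime_iff_coprime.mpr
      ((Nat.coprime_primes Nat.prime_two hp₃.out).mpr (by omega))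
    exact_mod_cast this
  have c04 : IsCoprime (2:ℤ) ((p₄:ℕ):ℤ) := by
    have := Nat.isCoprime_iff_coprime.mpr
      ((Nat.coprime_primes Nat.prime_two hp₄.out).mpr (by omega))
    exact_mod_cast this
  -- a is odd
  rcases Int.even_or_odd a with ⟨m, hm⟩ | ⟨k, hk⟩
  · exfalso
    have hdvd : (2:ℤ) ∣ 1 := ⟨2 * m ^ 2 - (p₂:ℤ) * (p₃:ℤ) * (p₄:ℤ) * b ^ 2,
      by linear_combination (a + 2 * m) * hm - heq⟩
    obtain ⟨w, hw⟩ := hdvd; omega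
  -- a > 1, k ≥ 1
  have hb1 : 1 ≤ b := hb0
  have hbb : 1 ≤ b ^ 2 := by nlinarith only [hb1, sq_nonneg (b - 1)]
  have hDpos : (0:ℤ) < 2 * (p₂:ℤ) * (p₃:ℤ) * (p₄:ℤ) :=
    mul_pos (mul_pos (mul_pos (by norm_num) P2) P3) P4
  have ha1' : 1 ≤ a := ha0
  have hsq : 1 < a ^ 2 := by nlinarith only [heq, hbb, hDpos]
  have ha1 : 1 < a := by nlinarith only [hsq, ha1', ha0]
  have hk0 : 0 < k := by omega
  -- b is even
  have h5 : (p₂:ℤ) * (p₃:ℤ) * (p₄:ℤ) * b ^ 2 = 2 * (k * (k + 1)) := by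
    have h4 : 2 * ((p₂:ℤ) * (p₃:ℤ) * (p₄:ℤ) * b ^ 2) = 2 * (2 * (k * (k + 1))) := by
      linear_combination (a + 2 * k + 1) * hk - heq
    exact mul_left_cancel₀ (by norm_num) h4
  have hoP : Odd ((p₂:ℤ) * (p₃:ℤ) * (p₄:ℤ)) := by
    have o2 : Odd ((p₂:ℕ):ℤ) := by
      rw [Int.odd_coe_nat]; exact Nat.odd_iff.mpr (by omega)
    have o3 : Odd ((p₃:ℕ):ℤ) := by
      rw [Int.odd_coe_nat]; exact Nat.odd_iff.mpr (by omega)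
    have o4 : Odd ((p₄:ℕ):ℤ) := by
      rw [Int.odd_coe_nat]; exact Nat.odd_iff.mpr (by omega)
    exact (o2.mul o3).mul o4
  have hbe : Even b := by
    have hev : Even ((p₂:ℤ) * (p₃:ℤ) * (p₄:ℤ) * b ^ 2) := by
      rw [h5]; exact ⟨k * (k + 1), by ring⟩
    rcases Int.even_mul.mp hev with h | h
    · exact absurd hoP (Int.not_odd_iff_even.mpr h)
    · exact (Int.even_pow.mp h).1
  obtain ⟨c, hc⟩ := hbe
  have hbc : b = 2 * c := by omega
  have hkc : k * (k + 1) = 2 * ((p₂:ℤ) * (p₃:ℤ) * (p₄:ℤ)) * c ^ 2 := by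
    have h6 : 2 * (k * (k + 1)) = 2 * (2 * ((p₂:ℤ) * (p₃:ℤ) * (p₄:ℤ)) * c ^ 2) := by
      linear_combination (p₂:ℤ) * (p₃:ℤ) * (p₄:ℤ) * (b + 2 * c) * hbc - h5
    exact mul_left_cancel₀ (by norm_num) h6
  -- which side each prime divides
  have hd2 : (2:ℤ) ∣ k ∨ (2:ℤ) ∣ (k + 1) := by
    rcases Int.even_or_odd k with ⟨m, hm⟩ | ⟨m, hm⟩
    · exact Or.inl ⟨m, by omega⟩
    · exact Or.inr ⟨m + 1, by omega⟩
  have hdp2 : ((p₂:ℕ):ℤ) ∣ k ∨ ((p₂:ℕ):ℤ) ∣ (k + 1) := by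
    refine (Nat.prime_iff_prime_int.mp hp₂.out).dvd_mul.mp ?_
    exact ⟨2 * (p₃:ℤ) * (p₄:ℤ) * c ^ 2, by linear_combination hkc⟩
  have hdp3 : ((p₃:ℕ):ℤ) ∣ k ∨ ((p₃:ℕ):ℤ) ∣ (k + 1) := by
    refine (Nat.prime_iff_prime_int.mp hp₃.out).dvd_mul.mp ?_
    exact ⟨2 * (p₂:ℤ) * (p₄:ℤ) * c ^ 2, by linear_combination hkc⟩
  have hdp4 : ((p₄:ℕ):ℤ) ∣ k ∨ ((p₄:ℕ):ℤ) ∣ (k + 1) := by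
    refine (Nat.prime_iff_prime_int.mp hp₄.out).dvd_mul.mp ?_
    exact ⟨2 * (p₂:ℤ) * (p₃:ℤ) * c ^ 2, by linear_combination hkc⟩
  rcases hd2 with h2 | h2 <;> rcases hdp2 with hq2 | hq2 <;>
    rcases hdp3 with hq3 | hq3 <;> rcases hdp4 with hq4 | hq4
  · -- K=[0, 2, 3, 4] V=[]
    obtain ⟨s, t, hs, ht, hk1, hk2, hc2⟩ := extract k (2*(p₂:ℤ)*(p₃:ℤ)*(p₄:ℤ)) (1) c hk0 (mul_pos (mul_pos (mul_pos (by norm_num : (0:ℤ) < 2) P2) P3) P4) one_pos (((c04.mul_left c24).mul_left c34).mul_dvd ((c03.mul_left c23).mul_dvd (c02.mul_dvd h2 hq2) hq3) hq4) (one_dvd _) (by linear_combination hkc)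
    have hsol : t ^ 2 - 2 * (p₂:ℤ) * (p₃:ℤ) * (p₄:ℤ) * s ^ 2 = 1 := by linear_combination hk1 - hk2
    have hat := hmin t s ht hs hsol
    have htt : t ≤ t ^ 2 := by nlinarith only [mul_nonneg (by omega : (0:ℤ) ≤ t - 1) (by omega : (0:ℤ) ≤ t)]
    exfalso; linarith only [hat, htt, hk0, hk2, hk]
  · -- K=[0, 2, 3] V=[4]
    obtain ⟨s, t, hs, ht, hk1, hk2, hc2⟩ := extract k (2*(p₂:ℤ)*(p₃:ℤ)) ((p₄:ℤ)) c hk0 (mul_pos (mul_pos (by norm_num : (0:ℤ) < 2) P2) P3) P4 ((c03.mul_left c23).mul_dvd (c02.mul_dvd h2 hq2) hq3) hq4 (by linear_combination hkc)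
    have hc0 : 0 < c := by omega
    have hz : (c - s*t) * (c + s*t) = 0 := by linear_combination hc2
    have hcst : c = s * t := by
      rcases mul_eq_zero.mp hz with h | h
      · linarith only [h]
      · linarith only [h, hc0, mul_pos hs ht]
    have h5 : a + 1 = 2 * (p₄:ℤ) * t ^ 2 := by linear_combination hk + 2 * hk2
    have h6 : a - 1 = (p₂:ℤ) * (p₃:ℤ) * (2*s) ^ 2 := by linear_combination hk + 2 * hk1
    refine ⟨t, 2*s, by linear_combination hbc + 2 * hcst, h5, h6, by linear_combination h6 - h5, ?_⟩
    have r1 : (a:ℝ) + 1 = 2 * (p₄:ℝ) * (t:ℝ) ^ 2 := by exact_mod_cast h5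
    have r2 : (a:ℝ) - 1 = (p₂:ℝ) * (p₃:ℝ) * (2*(s:ℝ)) ^ 2 := by exact_mod_cast h6
    have rb : (b:ℝ) = (t:ℝ) * (2*(s:ℝ)) := by exact_mod_cast (by linear_combination hbc + 2 * hcst : b = t * (2*s))
    have hsq1 : Real.sqrt (2*(p₄:ℝ)) ^ 2 = 2*(p₄:ℝ) := Real.sq_sqrt (by positivity)
    have hsq2 : Real.sqrt ((p₂:ℝ)*(p₃:ℝ)) ^ 2 = (p₂:ℝ)*(p₃:ℝ) := Real.sq_sqrt (by positivity)
    have hmulsq : Real.sqrt (2*(p₄:ℝ)) * Real.sqrt ((p₂:ℝ)*(p₃:ℝ)) = Real.sqrt (2*(p₂:ℝ)*(p₃:ℝ)*(p₄:ℝ)) := by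
      rw [← Real.sqrt_mul (by positivity)]; congr 1; ring
    push_cast
    linear_combination r1 + r2 - (t:ℝ) ^ 2 * hsq1 - 4*(s:ℝ)^2 * hsq2 - 4*(s:ℝ)*(t:ℝ) * hmulsq + 2 * Real.sqrt (2*(p₂:ℝ)*(p₃:ℝ)*(p₄:ℝ)) * rb
  · -- K=[0, 2, 4] V=[3]
    obtain ⟨s, t, hs, ht, hk1, hk2, hc2⟩ := extract k (2*(p₂:ℤ)*(p₄:ℤ)) ((p₃:ℤ)) c hk0 (mul_pos (mul_pos (by norm_num : (0:ℤ) < 2) P2) P4) P3 ((c04.mul_left c24).mul_dvd (c02.mul_dvd h2 hq2) hq4) hq3 (by linear_combination hkc)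
    have hcon := leg_one p₂ ((p₃:ℤ)) t (dvd_aux1 hk1 hk2 ⟨2*(p₄:ℤ), by ring⟩)
    norm_num [legendreSym.mul, h₁] at hcon
  · -- K=[0, 2] V=[3, 4]
    obtain ⟨s, t, hs, ht, hk1, hk2, hc2⟩ := extract k (2*(p₂:ℤ)) ((p₃:ℤ)*(p₄:ℤ)) c hk0 (mul_pos (by norm_num : (0:ℤ) < 2) P2) (mul_pos P3 P4) (c02.mul_dvd h2 hq2) (c34.mul_dvd hq3 hq4) (by linear_combination hkc)
    have hcon := leg_one p₂ ((p₃:ℤ)*(p₄:ℤ)) t (dvd_aux1 hk1 hk2 ⟨2, by ring⟩)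
    norm_num [legendreSym.mul, h₁, L24] at hcon
  · -- K=[0, 3, 4] V=[2]
    obtain ⟨s, t, hs, ht, hk1, hk2, hc2⟩ := extract k (2*(p₃:ℤ)*(p₄:ℤ)) ((p₂:ℤ)) c hk0 (mul_pos (mul_pos (by norm_num : (0:ℤ) < 2) P3) P4) P2 ((c04.mul_left c34).mul_dvd (c03.mul_dvd h2 hq3) hq4) hq2 (by linear_combination hkc)
    have hcon := leg_one p₄ ((p₂:ℤ)) t (dvd_aux1 hk1 hk2 ⟨2*(p₃:ℤ), by ring⟩)
    norm_num [legendreSym.mul, h₂] at hcon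
  · -- K=[0, 3] V=[2, 4]
    obtain ⟨s, t, hs, ht, hk1, hk2, hc2⟩ := extract k (2*(p₃:ℤ)) ((p₂:ℤ)*(p₄:ℤ)) c hk0 (mul_pos (by norm_num : (0:ℤ) < 2) P3) (mul_pos P2 P4) (c03.mul_dvd h2 hq3) (c24.mul_dvd hq2 hq4) (by linear_combination hkc)
    have hcon := leg_one p₄ (-(2*(p₃:ℤ))) s (dvd_aux2 hk1 hk2 ⟨(p₂:ℤ), by ring⟩)
    rw [show (-(2*(p₃:ℤ)) : ℤ) = (-1)*2*(p₃:ℤ) from by ring, legendreSym.mul,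
      legendreSym.mul, L4n1, L4_2, h₃] at hcon
    norm_num at hcon
  · -- K=[0, 4] V=[2, 3]
    obtain ⟨s, t, hs, ht, hk1, hk2, hc2⟩ := extract k (2*(p₄:ℤ)) ((p₂:ℤ)*(p₃:ℤ)) c hk0 (mul_pos (by norm_num : (0:ℤ) < 2) P4) (mul_pos P2 P3) (c04.mul_dvd h2 hq4) (c23.mul_dvd hq2 hq3) (by linear_combination hkc)
    have hcon := leg_one p₂ (-(2*(p₄:ℤ))) s (dvd_aux2 hk1 hk2 ⟨(p₃:ℤ), by ring⟩)
    rw [show (-(2*(p₄:ℤ)) : ℤ) = (-1)*2*(p₄:ℤ) from by ring, legendreSym.mul,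
      legendreSym.mul, L2n1, L22, L24] at hcon
    norm_num at hcon
  · -- K=[0] V=[2, 3, 4]
    obtain ⟨s, t, hs, ht, hk1, hk2, hc2⟩ := extract k (2) ((p₂:ℤ)*(p₃:ℤ)*(p₄:ℤ)) c hk0 (by norm_num : (0:ℤ) < 2) (mul_pos (mul_pos P2 P3) P4) h2 ((c24.mul_left c34).mul_dvd (c23.mul_dvd hq2 hq3) hq4) (by linear_combination hkc)
    have hcon := leg_one p₂ (-(2)) s (dvd_aux2 hk1 hk2 ⟨(p₃:ℤ)*(p₄:ℤ), by ring⟩)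
    rw [show (-(2:ℤ) : ℤ) = (-1)*2 from by ring, legendreSym.mul, L2n1, L22] at hcon
    norm_num at hcon
  · -- K=[2, 3, 4] V=[0]
    obtain ⟨s, t, hs, ht, hk1, hk2, hc2⟩ := extract k ((p₂:ℤ)*(p₃:ℤ)*(p₄:ℤ)) (2) c hk0 (mul_pos (mul_pos P2 P3) P4) (by norm_num : (0:ℤ) < 2) ((c24.mul_left c34).mul_dvd (c23.mul_dvd hq2 hq3) hq4) h2 (by linear_combination hkc)
    have hcon := leg_one p₃ (2) t (dvd_aux1 hk1 hk2 ⟨(p₂:ℤ)*(p₄:ℤ), by ring⟩)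
    norm_num [legendreSym.mul, L3_2] at hcon
  · -- K=[2, 3] V=[0, 4]
    obtain ⟨s, t, hs, ht, hk1, hk2, hc2⟩ := extract k ((p₂:ℤ)*(p₃:ℤ)) (2*(p₄:ℤ)) c hk0 (mul_pos P2 P3) (mul_pos (by norm_num : (0:ℤ) < 2) P4) (c23.mul_dvd hq2 hq3) (c04.mul_dvd h2 hq4) (by linear_combination hkc)
    have hcon := leg_one p₃ (2*(p₄:ℤ)) t (dvd_aux1 hk1 hk2 ⟨(p₂:ℤ), by ring⟩)
    norm_num [legendreSym.mul, L3_2, L34] at hcon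
  · -- K=[2, 4] V=[0, 3]
    obtain ⟨s, t, hs, ht, hk1, hk2, hc2⟩ := extract k ((p₂:ℤ)*(p₄:ℤ)) (2*(p₃:ℤ)) c hk0 (mul_pos P2 P4) (mul_pos (by norm_num : (0:ℤ) < 2) P3) (c24.mul_dvd hq2 hq4) (c03.mul_dvd h2 hq3) (by linear_combination hkc)
    have hcon := leg_one p₂ (2*(p₃:ℤ)) t (dvd_aux1 hk1 hk2 ⟨(p₄:ℤ), by ring⟩)
    norm_num [legendreSym.mul, L22, h₁] at hcon
  · -- K=[2] V=[0, 3, 4]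
    obtain ⟨s, t, hs, ht, hk1, hk2, hc2⟩ := extract k ((p₂:ℤ)) (2*(p₃:ℤ)*(p₄:ℤ)) c hk0 P2 (mul_pos (mul_pos (by norm_num : (0:ℤ) < 2) P3) P4) hq2 ((c04.mul_left c34).mul_dvd (c03.mul_dvd h2 hq3) hq4) (by linear_combination hkc)
    have hcon := leg_one p₂ (2*(p₃:ℤ)*(p₄:ℤ)) t (dvd_aux1 hk1 hk2 ⟨1, by ring⟩)
    norm_num [legendreSym.mul, L22, h₁, L24] at hcon
  · -- K=[3, 4] V=[0, 2]
    obtain ⟨s, t, hs, ht, hk1, hk2, hc2⟩ := extract k ((p₃:ℤ)*(p₄:ℤ)) (2*(p₂:ℤ)) c hk0 (mul_pos P3 P4) (mul_pos (by norm_num : (0:ℤ) < 2) P2) (c34.mul_dvd hq3 hq4) (c02.mul_dvd h2 hq2) (by linear_combination hkc)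
    have hcon := leg_one p₃ (2*(p₂:ℤ)) t (dvd_aux1 hk1 hk2 ⟨(p₄:ℤ), by ring⟩)
    norm_num [legendreSym.mul, L3_2, L32] at hcon
  · -- K=[3] V=[0, 2, 4]
    obtain ⟨s, t, hs, ht, hk1, hk2, hc2⟩ := extract k ((p₃:ℤ)) (2*(p₂:ℤ)*(p₄:ℤ)) c hk0 P3 (mul_pos (mul_pos (by norm_num : (0:ℤ) < 2) P2) P4) hq3 ((c04.mul_left c24).mul_dvd (c02.mul_dvd h2 hq2) hq4) (by linear_combination hkc)
    have hcon := leg_one p₃ (2*(p₂:ℤ)*(p₄:ℤ)) t (dvd_aux1 hk1 hk2 ⟨1, by ring⟩)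
    norm_num [legendreSym.mul, L3_2, L32, L34] at hcon
  · -- K=[4] V=[0, 2, 3]
    obtain ⟨s, t, hs, ht, hk1, hk2, hc2⟩ := extract k ((p₄:ℤ)) (2*(p₂:ℤ)*(p₃:ℤ)) c hk0 P4 (mul_pos (mul_pos (by norm_num : (0:ℤ) < 2) P2) P3) hq4 ((c03.mul_left c23).mul_dvd (c02.mul_dvd h2 hq2) hq3) (by linear_combination hkc)
    have hcon := leg_one p₄ (2*(p₂:ℤ)*(p₃:ℤ)) t (dvd_aux1 hk1 hk2 ⟨1, by ring⟩)
    norm_num [legendreSym.mul, L4_2, h₂, h₃] at hcon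
  · -- K=[] V=[0, 2, 3, 4]
    obtain ⟨s, t, hs, ht, hk1, hk2, hc2⟩ := extract k (1) (2*(p₂:ℤ)*(p₃:ℤ)*(p₄:ℤ)) c hk0 one_pos (mul_pos (mul_pos (mul_pos (by norm_num : (0:ℤ) < 2) P2) P3) P4) (one_dvd _) (((c04.mul_left c24).mul_left c34).mul_dvd ((c03.mul_left c23).mul_dvd (c02.mul_dvd h2 hq2) hq3) hq4) (by linear_combination hkc)
    have hcon := leg_one p₂ (-(1)) s (dvd_aux2 hk1 hk2 ⟨2*(p₃:ℤ)*(p₄:ℤ), by ring⟩)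
    norm_num [legendreSym.mul, L2n1] at hcon
end

section
/- Let p₂, p₃, p₄ be distinct primes with p₂ ≡ 7 (mod 8), p₃ ≡ p₄ ≡ 3 (mod 8), and (p₃/p₂) = (p₂/p₄) = (p₃/p₄) = −1. Then there are no integers a, b₁, b₂ with a − 1 = 2p₄·b₁² and a + 1 = p₂p₃·b₂². -/
/-- for distinct primes `p₂ ≡ 7 (mod 8)`, `p₃ ≡ p₄ ≡ 3 (mod 8)` with
`(p₃/p₂) = (p₂/p₄) = (p₃/p₄) = −1`, there are no integers `a, b₁, b₂` with
`a − 1 = 2p₄·b₁²` and `a + 1 = p₂p₃·b₂²`. -/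
theorem stmt_7 (p₂ p₃ p₄ : ℕ)
    [hp₂ : Fact p₂.Prime] [hp₃ : Fact p₃.Prime] [hp₄ : Fact p₄.Prime]
    (hd₂₃ : p₂ ≠ p₃) (hd₂₄ : p₂ ≠ p₄) (hd₃₄ : p₃ ≠ p₄)
    (hc₂ : p₂ % 8 = 7) (hc₃ : p₃ % 8 = 3) (hc₄ : p₄ % 8 = 3)
    (h₁ : legendreSym p₂ (p₃ : ℤ) = -1)
    (h₂ : legendreSym p₄ (p₂ : ℤ) = -1)
    (h₃ : legendreSym p₄ (p₃ : ℤ) = -1) :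
    ¬ ∃ a b₁ b₂ : ℤ, a - 1 = 2 * p₄ * b₁ ^ 2 ∧ a + 1 = p₂ * p₃ * b₂ ^ 2 := by
  rintro ⟨a, b₁, b₂, e1, e2⟩
  have hp4ne2 : p₄ ≠ 2 := by omega
  have key : ((p₂ : ℤ) * p₃ * b₂ ^ 2) % p₄ = 2 % p₄ := by
    have : (p₂ : ℤ) * p₃ * b₂ ^ 2 = 2 + (p₄ : ℤ) * (2 * b₁ ^ 2) := by linarith
    rw [this, Int.add_mul_emod_self_left]
  have hcongr : legendreSym p₄ ((p₂ : ℤ) * p₃ * b₂ ^ 2) = legendreSym p₄ 2 := by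
    rw [legendreSym.mod, key, ← legendreSym.mod]
  have h2 : legendreSym p₄ 2 = -1 := by
    rw [legendreSym.at_two hp4ne2, ZMod.χ₈_nat_eq_if_mod_eight, hc₄]
    norm_num
    omega
  rw [h2, legendreSym.mul, legendreSym.mul, h₂, h₃] at hcongr
  by_cases hb : ((b₂ : ℤ) : ZMod p₄) = 0
  · rw [(legendreSym.eq_zero_iff p₄ _).mpr (by push_cast [hb]; ring)] at hcongr
    norm_num at hcongr
  · rw [legendreSym.sq_one' p₄ hb] at hcongr
    norm_num at hcongr
end

section
/- Let p₁, p₂, p₃ be distinct primes, each congruent to 7 modulo 8, with (−p₁/p₂) = (−p₂/p₃) = (−p₃/p₁) = −1. Then p₁·ε_{2p₁} is a square in the field K⁺ = ℚ(√(2p₁), √(2p₂), √(2p₃)) ⊂ ℝ; that is, the positive real square root √(p₁·ε_{2p₁}) lies in K⁺. -/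
/-- `x` is a unit of the ring of integers of the subfield `K` of `ℝ`. -/
def IsUnitIn (K : IntermediateField ℚ ℝ) (x : ℝ) : Prop :=
  x ∈ K ∧ IsIntegral ℤ x ∧ x ≠ 0 ∧ IsIntegral ℤ x⁻¹

/-- `ε` is the fundamental unit of `ℚ(√m)`, realized in `ℝ` via the embedding
sending `√m` to the positive square root: the smallest unit `> 1`. -/
def IsFundamentalUnit (m : ℕ) (ε : ℝ) : Prop :=
  IsUnitIn (IntermediateField.adjoin ℚ {Real.sqrt (m : ℝ)}) ε ∧ 1 < ε ∧
    ∀ y : ℝ, IsUnitIn (IntermediateField.adjoin ℚ {Real.sqrt (m : ℝ)}) y → 1 < y → ε ≤ y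

/-!
Since `2p ≡ 2 (mod 4)` is squarefree, the units of `ℚ(√(2p))` are the units of `ℤ[√(2p)]`, so
`ε = a + b√(2p)` with `a, b > 0` and `a² - 2pb² = ±1`; the sign `-1` would make `-1` a square
mod `p ≡ 3 (mod 4)`. Writing `a = 2A + 1`, `b = 2c` gives `A(A + 1) = 2pc²` with coprime factors,
hence `A = es²`, `A + 1 = ft²` with `ef = 2p`, and then `eε = (es + t√(2p))²`. If `e` or `f` were
`1`, `ε` would be the square of a smaller unit, so `{e, f} = {2, p}` and `pε` is the square of an
element of `ℚ(√(2p)) ⊆ K⁺`.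
-/

theorem Nat.Coprime.exists_eq_mul_sq_of_mul_eq {m n d c : ℕ} (hmn : m.Coprime n) (hd : d ≠ 0)
    (h : m * n = d * c ^ 2) :
    ∃ e f s t : ℕ, e * f = d ∧ m = e * s ^ 2 ∧ n = f * t ^ 2 ∧ c = s * t := by
  have hef : d.gcd m * d.gcd n = d := by
    rw [← hmn.gcd_mul d, Nat.gcd_eq_left ⟨c ^ 2, h⟩]
  obtain ⟨m', hm⟩ := Nat.gcd_dvd_right d m
  obtain ⟨n', hn⟩ := Nat.gcd_dvd_right d n
  have hmn' : m'.Coprime n' := by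
    rw [hm, hn] at hmn
    exact hmn.coprime_mul_left.coprime_mul_left_right
  have hc : m' * n' = c ^ 2 := by
    refine mul_left_cancel₀ hd ?_
    calc d * (m' * n') = d.gcd m * m' * (d.gcd n * n') := by rw [mul_mul_mul_comm, hef]
      _ = d * c ^ 2 := by rw [← hm, ← hn, h]
  obtain ⟨s, rfl⟩ := exists_eq_pow_of_mul_eq_pow (Nat.isUnit_iff.mpr hmn') hc
  obtain ⟨t, rfl⟩ := exists_eq_pow_of_mul_eq_pow (Nat.isUnit_iff.mpr hmn'.symm)
    ((mul_comm _ _).trans hc)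
  refine ⟨_, _, s, t, hef, hm, hn, Nat.pow_left_injective two_ne_zero ?_⟩
  simp only [← hc, mul_pow]

theorem exists_of_sq_eq_mul_sq_add_one {d a b : ℕ} (hd : d % 4 = 2) (h : a ^ 2 = d * b ^ 2 + 1) :
    ∃ e f s t : ℕ, e * f = d ∧ a = e * s ^ 2 + f * t ^ 2 ∧ b = 2 * s * t := by
  obtain ⟨c, rfl⟩ : Even b := by
    have hmod4 : ∀ x y : ZMod 4, x ^ 2 = 2 * y ^ 2 + 1 → y.val % 2 = 0 := by decide
    have hcast := congrArg (Nat.cast : ℕ → ZMod 4) h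
    push_cast at hcast
    rw [← ZMod.natCast_mod d, hd] at hcast
    have := hmod4 _ _ hcast
    rw [ZMod.val_natCast] at this
    exact Nat.even_iff.mpr (by omega)
  obtain ⟨A, rfl⟩ : Odd a := by
    exact (Nat.odd_pow_iff two_ne_zero).mp ⟨2 * d * c ^ 2, by rw [h]; ring⟩
  have hA : A * (A + 1) = d * c ^ 2 := by
    have : 4 * (A * (A + 1)) = 4 * (d * c ^ 2) := by linarith [h]
    omega
  obtain ⟨e, f, s, t, hef, hs, ht, rfl⟩ :=
    (Nat.coprime_self_add_right.mpr (Nat.coprime_one_right A)).exists_eq_mul_sq_of_mul_eq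
      (by omega) hA
  exact ⟨e, f, s, t, hef, by omega, by ring⟩

theorem exists_of_sq_eq_two_mul_prime_mul_sq_add_one {p a b : ℕ} (hp : p.Prime) (hp2 : p ≠ 2)
    (h : a ^ 2 = 2 * p * b ^ 2 + 1) :
    ∃ s t : ℕ, (a = s ^ 2 + 2 * p * t ^ 2 ∨ a = p * s ^ 2 + 2 * t ^ 2) ∧ b = 2 * s * t := by
  have hp4 : 2 * p % 4 = 2 := by have := hp.eq_one_or_self_of_dvd 2; omega
  obtain ⟨e, f, s, t, hef, ha, hb⟩ := exists_of_sq_eq_mul_sq_add_one hp4 h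
  obtain ⟨e₁, e₂, h₁, h₂, rfl⟩ := Nat.dvd_mul.mp (Dvd.intro f hef)
  rcases (Nat.dvd_prime Nat.prime_two).mp h₁ with rfl | rfl <;>
    rcases (Nat.dvd_prime hp).mp h₂ with rfl | rfl
  · obtain rfl : f = 2 * p := by omega
    exact ⟨s, t, .inl (by rw [ha]; ring), hb⟩
  · obtain rfl : f = 2 := by nlinarith [hp.pos]
    exact ⟨s, t, .inr (by rw [ha]; ring), hb⟩
  · obtain rfl : f = p := by omega
    exact ⟨t, s, .inr (by rw [ha]; ring), by rw [hb]; ring⟩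
  · obtain rfl : f = 1 := by nlinarith [hp.pos]
    exact ⟨t, s, .inl (by rw [ha]; ring), by rw [hb]; ring⟩

open Polynomial IntermediateField

theorem exists_eq_add_mul_of_mem_adjoin {K L : Type*} [Field K] [Field L] [Algebra K L]
    {y : L} {c : K} (hy : y ^ 2 = algebraMap K L c) {x : L} (hx : x ∈ K⟮y⟯) :
    ∃ q r : K, x = algebraMap K L q + algebraMap K L r * y := by
  have hyalg : IsAlgebraic K y :=
    ⟨X ^ 2 - C c, X_pow_sub_C_ne_zero two_pos c, by simp [hy]⟩
  rw [← mem_toSubalgebra, adjoin_simple_toSubalgebra_of_isAlgebraic hyalg] at hx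
  induction hx using Algebra.adjoin_induction with
  | mem y' hy' => exact ⟨0, 1, by simp [Set.mem_singleton_iff.mp hy']⟩
  | algebraMap q => exact ⟨q, 0, by simp⟩
  | add _ _ _ _ h₁ h₂ =>
    obtain ⟨⟨q₁, r₁, rfl⟩, ⟨q₂, r₂, rfl⟩⟩ := And.intro h₁ h₂
    exact ⟨q₁ + q₂, r₁ + r₂, by simp only [map_add]; ring⟩
  | mul _ _ _ _ h₁ h₂ =>
    obtain ⟨⟨q₁, r₁, rfl⟩, ⟨q₂, r₂, rfl⟩⟩ := And.intro h₁ h₂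
    refine ⟨q₁ * q₂ + r₁ * r₂ * c, q₁ * r₂ + r₁ * q₂, ?_⟩
    simp only [map_add, map_mul]
    linear_combination (algebraMap K L r₁ * algebraMap K L r₂) * hy

theorem exists_int_eq_of_isIntegral_of_sq_sub_mul_add {x : ℝ} (hx : IsIntegral ℤ x)
    (hirr : Irrational x) {u v : ℚ} (h : x ^ 2 - u * x + v = 0) :
    ∃ k n : ℤ, u = k ∧ v = n := by
  set P : ℚ[X] := X ^ 2 - C u * X + C v
  have hP : P.Monic := by simp only [P]; monicity!
  have hPdeg : P.natDegree = 2 := by simp only [P]; compute_degree!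
  have hPx : aeval x P = 0 := by simpa [P] using h
  have hmin : minpoly ℚ x = P := by
    refine (eq_of_monic_of_dvd_of_natDegree_le (minpoly.monic hx.tower_top) hP
      (minpoly.dvd ℚ x hPx) ?_).symm
    rw [hPdeg, minpoly.two_le_natDegree_iff hx.tower_top]
    rintro ⟨q, rfl⟩
    exact hirr ⟨q, rfl⟩
  have hcoeff (i : ℕ) : ∃ k : ℤ, P.coeff i = k :=
    ⟨(minpoly ℤ x).coeff i, by
      rw [← hmin, minpoly.isIntegrallyClosed_eq_field_fractions' ℚ hx, coeff_map, eq_intCast]⟩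
  obtain ⟨⟨k, hk⟩, ⟨n, hn⟩⟩ := And.intro (hcoeff 1) (hcoeff 0)
  refine ⟨-k, n, ?_, ?_⟩
  · simp [P, coeff_C] at hk; push_cast; linarith
  · simpa [P, coeff_X, coeff_C] using hn

theorem Rat.exists_int_eq_of_squarefree_mul_sq {d : ℕ} (hd : Squarefree d) {w : ℚ} {n : ℤ}
    (h : d * w ^ 2 = n) : ∃ j : ℤ, w = j := by
  refine ⟨w.num, (Rat.coe_int_num_of_den_eq_one ?_).symm⟩
  have hZ : ((d * w.num.natAbs ^ 2 : ℕ) : ℤ) = n * (w.den ^ 2 : ℕ) := by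
    have : (d : ℚ) * w.num ^ 2 = n * w.den ^ 2 := by
      rw [← Rat.mul_den_eq_num, mul_pow, ← mul_assoc, h]
    push_cast [Int.natCast_natAbs, sq_abs]
    exact_mod_cast this
  have hdvd : w.den ^ 2 ∣ d * w.num.natAbs ^ 2 :=
    Int.natCast_dvd_natCast.mp ⟨n, by rw [hZ, mul_comm]⟩
  have := (Nat.Coprime.pow 2 2 w.reduced.symm).dvd_of_dvd_mul_right hdvd
  exact Nat.isUnit_iff.mp (hd _ (by rwa [← sq]))

theorem two_dvd_of_sq_sub_mul_sq_eq_four_mul {d : ℕ} (hd : d % 4 = 2 ∨ d % 4 = 3) {k j n : ℤ}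
    (h : k ^ 2 - d * j ^ 2 = 4 * n) : 2 ∣ k ∧ 2 ∣ j := by
  have hmod4 : ∀ k j e : ZMod 4, (e = 2 ∨ e = 3) → k ^ 2 - e * j ^ 2 = 0 →
      ((2 * k : ZMod 4) = 0 ∧ (2 * j : ZMod 4) = 0) := by decide
  have he : (d : ZMod 4) = 2 ∨ (d : ZMod 4) = 3 := by
    rw [← ZMod.natCast_mod d]; rcases hd with hd | hd <;> rw [hd] <;> simp
  have hcast := congrArg (Int.cast : ℤ → ZMod 4) h
  push_cast at hcast
  rw [show (4 : ZMod 4) = 0 from rfl, zero_mul] at hcast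
  obtain ⟨hk, hj⟩ := hmod4 _ _ _ he hcast
  have h2 (m : ℤ) (hm : (2 * m : ZMod 4) = 0) : 2 ∣ m := by
    have := (ZMod.intCast_zmod_eq_zero_iff_dvd (2 * m) 4).mp (by push_cast; exact hm)
    omega
  exact ⟨h2 k hk, h2 j hj⟩

theorem not_isSquare_of_mod_four {d : ℕ} (hd : d % 4 = 2 ∨ d % 4 = 3) : ¬ IsSquare d := by
  rintro ⟨r, rfl⟩
  have := (two_dvd_of_sq_sub_mul_sq_eq_four_mul hd (k := r) (j := 1) (n := 0)
    (by push_cast; ring)).2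
  omega

namespace Zsqrtd

theorem norm_ne_neg_one_of_dvd {p : ℕ} [Fact p.Prime] (hp : p % 4 = 3) {d : ℤ} (hd : (p : ℤ) ∣ d)
    (z : ℤ√d) : z.norm ≠ -1 := by
  intro h
  have hcast := congrArg (Int.cast : ℤ → ZMod p) h
  rw [norm_def] at hcast
  push_cast [(ZMod.intCast_zmod_eq_zero_iff_dvd d p).mpr hd] at hcast
  exact ZMod.exists_sq_eq_neg_one_iff.mp ⟨z.re, by rw [← hcast]; ring⟩ hp

theorem re_pos_and_im_pos_of_one_lt_toReal {d : ℤ} (h0d : 0 ≤ d) {z : ℤ√d} (hz : z.norm = 1)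
    (h : 1 < toReal h0d z) : 0 < z.re ∧ 0 < z.im := by
  have hconj : toReal h0d z * toReal h0d (star z) = 1 := by
    rw [← map_mul, ← norm_eq_mul_conj, hz]; simp
  simp only [toReal_apply, re_star, im_star, Int.cast_neg] at h hconj
  have hsqrt := Real.sqrt_nonneg (d : ℝ)
  constructor
  · have : (0 : ℝ) < z.re := by nlinarith
    exact_mod_cast this
  · have : (0 : ℝ) < z.im * √(d : ℝ) := by nlinarith
    exact_mod_cast pos_of_mul_pos_left this hsqrt

section

variable {d : ℕ}

theorem toReal_natCast_apply (z : ℤ√(d : ℤ)) :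
    toReal (Int.natCast_nonneg d) z = z.re + z.im * √(d : ℝ) := by
  simp

theorem toReal_natCast_mem_adjoin (z : ℤ√(d : ℤ)) :
    toReal (Int.natCast_nonneg d) z ∈ ℚ⟮√(d : ℝ)⟯ := by
  rw [toReal_natCast_apply]
  exact add_mem (intCast_mem _ _) (mul_mem (intCast_mem _ _) (mem_adjoin_simple_self ℚ _))

theorem isIntegral_toReal_natCast (z : ℤ√(d : ℤ)) :
    IsIntegral ℤ (toReal (Int.natCast_nonneg d) z) := by
  have hsqrt : IsIntegral ℤ √(d : ℝ) :=
    ⟨X ^ 2 - C (d : ℤ), monic_X_pow_sub_C _ two_ne_zero,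
      by simp [Real.sq_sqrt (Nat.cast_nonneg d)]⟩
  rw [toReal_natCast_apply]
  exact (isIntegral_intCast _).add ((isIntegral_intCast _).mul hsqrt)

theorem toReal_natCast_injective (hd : ¬ IsSquare d) :
    Function.Injective (toReal (Int.natCast_nonneg d)) :=
  toReal_injective _ fun n hn => hd ⟨n.natAbs, by
    rw [← Int.natAbs_mul_self'] at hn; exact_mod_cast hn⟩

theorem exists_toReal_natCast_eq_of_isIntegral (hsf : Squarefree d)
    (hd : d % 4 = 2 ∨ d % 4 = 3) {x : ℝ} (hx : x ∈ ℚ⟮√(d : ℝ)⟯) (hint : IsIntegral ℤ x) :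
    ∃ z : ℤ√(d : ℤ), toReal (Int.natCast_nonneg d) z = x := by
  have hsq : √(d : ℝ) ^ 2 = d := Real.sq_sqrt (Nat.cast_nonneg d)
  obtain ⟨q, r, rfl⟩ := exists_eq_add_mul_of_mem_adjoin (c := (d : ℚ)) (by simp [hsq]) hx
  simp only [eq_ratCast] at hint ⊢
  rcases eq_or_ne r 0 with rfl | hr
  · have hq : IsIntegral ℤ q :=
      (isIntegral_algebraMap_iff (algebraMap ℚ ℝ).injective).mp (by simpa using hint)
    obtain ⟨k, hk⟩ := IsIntegrallyClosed.isIntegral_iff.mp hq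
    exact ⟨⟨k, 0⟩, by simp [← hk]⟩
  have hirr : Irrational (q + r * √(d : ℝ)) :=
    ((irrational_sqrt_natCast_iff.mpr (not_isSquare_of_mod_four hd)).ratCast_mul hr).ratCast_add q
  obtain ⟨k, n, hk, hn⟩ := exists_int_eq_of_isIntegral_of_sq_sub_mul_add hint hirr
    (u := 2 * q) (v := q ^ 2 - d * r ^ 2) (by push_cast; linear_combination (r : ℝ) ^ 2 * hsq)
  obtain ⟨j, hj⟩ := Rat.exists_int_eq_of_squarefree_mul_sq hsf (w := 2 * r) (n := k ^ 2 - 4 * n)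
    (by push_cast; rw [← hk, ← hn]; ring)
  obtain ⟨⟨k', rfl⟩, ⟨j', rfl⟩⟩ := two_dvd_of_sq_sub_mul_sq_eq_four_mul hd (n := n)
    (by exact_mod_cast (show (k : ℚ) ^ 2 - d * j ^ 2 = 4 * n by rw [← hk, ← hj, ← hn]; ring))
  refine ⟨⟨k', j'⟩, ?_⟩
  push_cast at hk hj
  simp [show (q : ℝ) = k' by exact_mod_cast (by linarith : q = k'),
    show (r : ℝ) = j' by exact_mod_cast (by linarith : r = j')]

theorem exists_isUnit_toReal_natCast_eq (hsf : Squarefree d) (hd : d % 4 = 2 ∨ d % 4 = 3)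
    {x : ℝ} (hx : IsUnitIn ℚ⟮√(d : ℝ)⟯ x) :
    ∃ z : ℤ√(d : ℤ), IsUnit z ∧ toReal (Int.natCast_nonneg d) z = x := by
  obtain ⟨hmem, hint, hne, hinv⟩ := hx
  obtain ⟨z, rfl⟩ := exists_toReal_natCast_eq_of_isIntegral hsf hd hmem hint
  obtain ⟨w, hw⟩ := exists_toReal_natCast_eq_of_isIntegral hsf hd (inv_mem hmem) hinv
  refine ⟨z, IsUnit.of_mul_eq_one w (toReal_natCast_injective (not_isSquare_of_mod_four hd) ?_), rfl⟩
  rw [map_mul, hw, map_one, mul_inv_cancel₀ hne]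

end

end Zsqrtd

theorem IsFundamentalUnit.sq_ne {m : ℕ} {ε : ℝ} (hε : IsFundamentalUnit m ε) {η : ℝ}
    (hmem : η ∈ ℚ⟮√(m : ℝ)⟯) (hint : IsIntegral ℤ η) (hpos : 0 < η) : η ^ 2 ≠ ε := by
  rintro rfl
  obtain ⟨⟨-, -, -, hinv⟩, h1, hmin⟩ := hε
  have hη : 1 < η := by nlinarith
  have hηinv : η⁻¹ = η * (η ^ 2)⁻¹ := by field_simp
  have := hmin η ⟨hmem, hint, hpos.ne', hηinv ▸ hint.mul hinv⟩ hη
  nlinarith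

theorem IsFundamentalUnit.exists_prime_mul_eq_sq {p : ℕ} (hp : p.Prime) (hp4 : p % 4 = 3)
    {ε : ℝ} (hε : IsFundamentalUnit (2 * p) ε) :
    ∃ s t : ℕ, p * ε = (p * s + t * √(2 * p : ℝ)) ^ 2 := by
  have := Fact.mk hp
  have hd4 : 2 * p % 4 = 2 := by omega
  have hsf : Squarefree (2 * p) :=
    Nat.squarefree_mul_iff.mpr ⟨(Nat.coprime_primes Nat.prime_two hp).mpr (by omega),
      Nat.prime_two.squarefree, hp.squarefree⟩
  obtain ⟨⟨a, b⟩, hunit, rfl⟩ := Zsqrtd.exists_isUnit_toReal_natCast_eq hsf (.inl hd4) hε.1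
  have hnorm : (⟨a, b⟩ : ℤ√((2 * p : ℕ) : ℤ)).norm = 1 :=
    (Int.isUnit_iff.mp ((Zsqrtd.isUnit_iff_norm_isUnit _).mp hunit)).resolve_right
      (Zsqrtd.norm_ne_neg_one_of_dvd hp4 (by push_cast; exact dvd_mul_left _ _) _)
  obtain ⟨hre, him⟩ := Zsqrtd.re_pos_and_im_pos_of_one_lt_toReal _ hnorm hε.2.1
  lift a to ℕ using hre.le
  lift b to ℕ using him.le
  have hpell : a ^ 2 = 2 * p * b ^ 2 + 1 := by
    rw [Zsqrtd.norm_def] at hnorm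
    push_cast at hnorm
    zify; linear_combination hnorm
  have hsqrt : √(2 * p : ℝ) ^ 2 = 2 * p := Real.sq_sqrt (by positivity)
  obtain ⟨s, t, rfl | rfl, rfl⟩ :=
    exists_of_sq_eq_two_mul_prime_mul_sq_add_one hp (by omega) hpell
  · refine absurd ?_ (hε.sq_ne (Zsqrtd.toReal_natCast_mem_adjoin ⟨s, t⟩)
      (Zsqrtd.isIntegral_toReal_natCast ⟨s, t⟩) ?_)
    · simp only [Zsqrtd.toReal_natCast_apply]
      push_cast
      linear_combination (t : ℝ) ^ 2 * hsqrt
    · have hs : 0 < s := Nat.pos_of_ne_zero (by rintro rfl; simp at him)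
      simp only [Zsqrtd.toReal_natCast_apply, Int.cast_natCast]
      exact add_pos_of_pos_of_nonneg (by exact_mod_cast hs) (by positivity)
  · refine ⟨s, t, ?_⟩
    simp only [Zsqrtd.toReal_natCast_apply]
    push_cast
    linear_combination (-(t : ℝ) ^ 2) * hsqrt

theorem stmt_18_general (p₁ p₂ p₃ : ℕ)
    [hp₁ : Fact p₁.Prime]
    (hc₁ : p₁ % 8 = 7)
    (ε₂₁ : ℝ) (hε₂₁ : IsFundamentalUnit (2 * p₁) ε₂₁) :
    Real.sqrt ((p₁ : ℝ) * ε₂₁) ∈ IntermediateField.adjoin ℚ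
      ({Real.sqrt (2 * (p₁ : ℝ)), Real.sqrt (2 * (p₂ : ℝ)),
        Real.sqrt (2 * (p₃ : ℝ))} : Set ℝ) := by
  obtain ⟨s, t, h⟩ := hε₂₁.exists_prime_mul_eq_sq hp₁.out (by omega)
  rw [h, Real.sqrt_sq (by positivity)]
  have hsqrt : √(2 * (p₁ : ℝ)) ∈ IntermediateField.adjoin ℚ
      ({√(2 * (p₁ : ℝ)), √(2 * (p₂ : ℝ)), √(2 * (p₃ : ℝ))} : Set ℝ) :=
    subset_adjoin _ _ (Set.mem_insert _ _)
  exact add_mem (mul_mem (IntermediateField.natCast_mem _ _) (IntermediateField.natCast_mem _ _))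
    (mul_mem (IntermediateField.natCast_mem _ _) hsqrt)

/-- `p₁·ε_{2p₁}` is a square in `K⁺ = ℚ(√(2p₁), √(2p₂), √(2p₃))`. -/
theorem stmt_18 (p₁ p₂ p₃ : ℕ)
    [hp₁ : Fact p₁.Prime] [hp₂ : Fact p₂.Prime] [hp₃ : Fact p₃.Prime]
    (hd₁₂ : p₁ ≠ p₂) (hd₁₃ : p₁ ≠ p₃) (hd₂₃ : p₂ ≠ p₃)
    (hc₁ : p₁ % 8 = 7) (hc₂ : p₂ % 8 = 7) (hc₃ : p₃ % 8 = 7)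
    (h₁ : legendreSym p₂ (-(p₁ : ℤ)) = -1)
    (h₂ : legendreSym p₃ (-(p₂ : ℤ)) = -1)
    (h₃ : legendreSym p₁ (-(p₃ : ℤ)) = -1)
    (ε₂₁ : ℝ) (hε₂₁ : IsFundamentalUnit (2 * p₁) ε₂₁) :
    Real.sqrt ((p₁ : ℝ) * ε₂₁) ∈ IntermediateField.adjoin ℚ
      ({Real.sqrt (2 * (p₁ : ℝ)), Real.sqrt (2 * (p₂ : ℝ)),
        Real.sqrt (2 * (p₃ : ℝ))} : Set ℝ) :=
  stmt_18_general p₁ p₂ p₃ (hp₁ := hp₁) hc₁ ε₂₁ hε₂₁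
end
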